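/- Under Assumption *, suppose (μ,Λ) is a spectral pair with 0 ∈ Λ, and let ν = ν_{>1}. With Γ_0 = {0, N_1/M_1, 2N_1/M_1, ..., (M_1−1)N_1/M_1}, Γ = [0, N_1/M_1) ∩ ℚ = {γ_0 = 0, γ_1, γ_2, ...}, Γ_k = γ_k + Γ_0, and P(γ) = {ω ∈ ℤ : γ + N_1ω ∈ Λ}: for any k ≠ j, any i_k ∈ Γ_k and any i_j ∈ Γ_j, the set (i_k/N_1 + P(i_k)) ∪ (i_j/N_1 + P(i_j)) is either empty or an orthogonal set of ν. -/

import Mathlib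

open MeasureTheory Filter Topology Complex Polynomial

/-- The exponential function `e_l(x) = e^{-2πi l x}`. -/
noncomputable def expFun (l x : ℝ) : ℂ :=
  Complex.exp (((-2 * Real.pi * l * x : ℝ) : ℂ) * Complex.I)

/-- The Fourier transform `μ̂(ξ) = ∫ e^{-2πiξx} dμ(x)` of a measure on `ℝ`. -/
noncomputable def ft (μ : Measure ℝ) (ξ : ℝ) : ℂ := ∫ x, expFun ξ x ∂μ

/-- `Λ` is an orthogonal (orthonormal) set for `μ`: the exponentials `e_λ`, `λ ∈ Λ`, form an
orthonormal family in `L²(μ)`. -/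
def IsOrthoSet (μ : Measure ℝ) (Λ : Set ℝ) : Prop :=
  ∀ l₁ ∈ Λ, ∀ l₂ ∈ Λ,
    (∫ x, (starRingEnd ℂ) (expFun l₁ x) * expFun l₂ x ∂μ) = if l₁ = l₂ then 1 else 0

/-- `(μ, Λ)` is a spectral pair: the exponentials `{e_λ : λ ∈ Λ}` form an orthonormal family
which is maximal (total) in `L²(μ)`, i.e. an orthonormal basis of `L²(μ)`. -/
def IsSpectralPair (μ : Measure ℝ) (Λ : Set ℝ) : Prop :=
  IsOrthoSet μ Λ ∧
  ∀ f : ℝ → ℂ, MemLp f 2 μ →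
    (∀ l ∈ Λ, (∫ x, (starRingEnd ℂ) (expFun l x) * f x ∂μ) = 0) → f =ᵐ[μ] 0

/-- `μ` is a spectral measure: some countable `Λ ⊆ ℝ` is a spectrum of `μ`. -/
def IsSpectralMeasure (μ : Measure ℝ) : Prop :=
  ∃ Λ : Set ℝ, Λ.Countable ∧ IsSpectralPair μ Λ

/-- The uniform probability measure `δ_A` on a finite set `A ⊆ ℝ`. -/
noncomputable def uniformD (A : Finset ℝ) : Measure ℝ :=
  (A.card : ENNReal)⁻¹ • ∑ a ∈ A, Measure.dirac a

/-- The measure `δ_{c⁻¹ B}` for a finite set `B ⊆ ℤ` and a scaling factor `c`. -/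
noncomputable def scaledB (B : Finset ℤ) (c : ℝ) : Measure ℝ :=
  uniformD (B.image fun b : ℤ => (b : ℝ) / c)

/-- The finite convolutions `μ_k = δ_{N₁⁻¹B₁} ∗ δ_{(N₁N₂)⁻¹B₂} ∗ ⋯ ∗ δ_{(N₁⋯N_k)⁻¹B_k}`
(the sequences are indexed starting from `k = 1`; `μ_0 = δ_0`). -/
noncomputable def partialConv (N : ℕ → ℕ) (B : ℕ → Finset ℤ) : ℕ → Measure ℝ
  | 0 => Measure.dirac 0
  | k + 1 =>
      MeasureTheory.Measure.conv (partialConv N B k)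
        (scaledB (B (k + 1)) (∏ i ∈ Finset.Icc 1 (k + 1), (N i : ℝ)))

/-- `μ` is the infinite convolution of `{(N_k, B_k)}_{k=1}^∞`: it is a Borel probability
measure and the finite convolutions `μ_k` converge weakly to `μ`. -/
def IsInfiniteConv (N : ℕ → ℕ) (B : ℕ → Finset ℤ) (μ : Measure ℝ) : Prop :=
  IsProbabilityMeasure μ ∧
    ∀ f : BoundedContinuousFunction ℝ ℝ,
      Tendsto (fun k => ∫ x, f x ∂(partialConv N B k)) atTop (𝓝 (∫ x, f x ∂μ))

/-- `ν` is the tail infinite convolution `ν_{>k} = δ_{N_{k+1}⁻¹B_{k+1}} ∗ ⋯`. -/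
def IsNuGt (N : ℕ → ℕ) (B : ℕ → Finset ℤ) (k : ℕ) (ν : Measure ℝ) : Prop :=
  IsInfiniteConv (fun j => N (k + j)) (fun j => B (k + j)) ν

/-- A family of measures is tight. -/
def IsTightFamily {ι : Type*} (Φ : ι → Measure ℝ) : Prop :=
  ∀ ε : ENNReal, 0 < ε → ∃ K : Set ℝ, IsCompact K ∧ ∀ i, 1 - ε < Φ i K

/-- `B` is a complete residue system modulo `M`: each residue class modulo `M` contains
exactly one element of `B`. -/
def IsCRS (B : Finset ℤ) (M : ℕ) : Prop :=
  ∀ r : ZMod M, ∃! b : ℤ, b ∈ B ∧ ((b : ZMod M) = r)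

/-- `∑_{b ∈ B} x^{b - b⁎}` where `b⁎ = min B`, i.e. `x^{-b⁎} ∑_{b ∈ B} x^b`. -/
noncomputable def numerPoly (B : Finset ℤ) : Polynomial ℤ :=
  ∑ b ∈ B, Polynomial.X ^ (b - (WithTop.untopD 0 B.min)).toNat

/-- `∑_{k=0}^{n-1} x^k`. -/
noncomputable def geomPoly (n : ℕ) : Polynomial ℤ :=
  ∑ k ∈ Finset.range n, Polynomial.X ^ k

/-- The character polynomial `f_B(x) = (∑_{b∈B} x^b)/(x^{b⁎} ∑_{k=0}^{#B-1} x^k)`,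
obtained by dividing by the monic polynomial `∑_{k=0}^{#B-1} x^k`. -/
noncomputable def charPoly (B : Finset ℤ) : Polynomial ℤ :=
  numerPoly B /ₘ geomPoly B.card

/-- `B` (a complete residue system modulo `M`) satisfies the uniform discrete zero
condition: `Z(f_B ∘ e^{-2πix}) ⊆ {j/M : j ∈ ℤ ∖ Mℤ}`. -/
def SatisfiesUDZ (B : Finset ℤ) (M : ℕ) : Prop :=
  {x : ℝ | Polynomial.aeval (expFun x 1) (charPoly B) = 0} ⊆
    {x : ℝ | ∃ j : ℤ, ¬ ((M : ℤ) ∣ j) ∧ x = (j : ℝ) / M}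

/-- `M_B(ξ) = (1/#B) ∑_{b∈B} e^{-2πibξ}`, the Fourier transform of `δ_B`. -/
noncomputable def MB (B : Finset ℤ) (ξ : ℝ) : ℂ :=
  (B.card : ℂ)⁻¹ * ∑ b ∈ B, expFun (b : ℝ) ξ

/-- `Q_{μ,Λ}(ξ) = ∑_{λ ∈ Λ} |μ̂(ξ+λ)|²`. -/
noncomputable def Qf (μ : Measure ℝ) (Λ : Set ℝ) (ξ : ℝ) : ℝ :=
  ∑' l : Λ, ‖ft μ (ξ + (l : ℝ))‖ ^ 2

/-- `P(γ) = {ω ∈ ℤ : γ + N₁ω ∈ Λ}`. -/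
def Pset (Λ : Set ℝ) (N1 γ : ℝ) : Set ℤ := {ω : ℤ | γ + N1 * (ω : ℝ) ∈ Λ}

/-- The translated set `γ/N₁ + P(γ)`, viewed as a subset of `ℝ`. -/
def PsetT (Λ : Set ℝ) (N1 γ : ℝ) : Set ℝ :=
  {x : ℝ | ∃ ω : ℤ, x = γ / N1 + (ω : ℝ) ∧ γ + N1 * (ω : ℝ) ∈ Λ}

/-- `Γ₀ = {0, N₁/M₁, 2N₁/M₁, …, (M₁-1)N₁/M₁}`. -/
def Gamma0 (N1 M1 : ℕ) : Set ℝ :=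
  {x : ℝ | ∃ t : ℕ, t < M1 ∧ x = (t : ℝ) * ((N1 : ℝ) / (M1 : ℝ))}

/-!
Distinct points `l₁ ≠ l₂` of the union are `λ₁ / N₁`, `λ₂ / N₁` with `λᵢ ∈ Λ`, so orthogonality
in `L²(μ)` and the factorization `μ̂(ξ) = M_{B₁}(ξ / N₁) ν̂(ξ / N₁)` give
`M_{B₁}(l₂ - l₁) ν̂(l₂ - l₁) = 0`. Since `B₁` is a complete residue system,
`f_{B₁}(x) (1 + x + ⋯ + x^{M₁-1}) = x^{-min B₁} ∑_{b ∈ B₁} x^b`, so a zero of `M_{B₁}` is a zero of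
`f_{B₁}` or a nontrivial `M₁`-th root of unity; either way `l₂ - l₁ = j / M₁` with `M₁ ∤ j`.
Writing `γᵢ = g_{kᵢ} + tᵢ N₁ / M₁` with `g_{kᵢ} ∈ [0, N₁ / M₁)`, this forces `g_{k₁} = g_{k₂}` and
`t₁ ≠ t₂`, impossible both when `γ₁ = γ₂` and when `k₁ ≠ k₂`. Hence `ν̂(l₂ - l₁) = 0`.
-/

lemma continuous_expFun (l : ℝ) : Continuous (expFun l) := by
  unfold expFun; fun_prop

lemma norm_expFun (l x : ℝ) : ‖expFun l x‖ = 1 :=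
  Complex.norm_exp_ofReal_mul_I _

lemma expFun_comm (l x : ℝ) : expFun l x = expFun x l := by
  simp only [expFun, mul_assoc, mul_comm l x]

lemma expFun_add_right (l x y : ℝ) : expFun l (x + y) = expFun l x * expFun l y := by
  simp only [expFun, ← Complex.exp_add, ← add_mul, ← Complex.ofReal_add, mul_add]

lemma expFun_zero_left (x : ℝ) : expFun 0 x = 1 := by
  simp [expFun]

lemma conj_expFun_mul_expFun (a b x : ℝ) :
    starRingEnd ℂ (expFun a x) * expFun b x = expFun (b - a) x := by
  simp only [expFun, ← Complex.exp_conj, ← Complex.exp_add, map_mul, Complex.conj_I,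
    Complex.conj_ofReal]
  congr 1
  push_cast
  ring

lemma expFun_intCast (b : ℤ) (ξ : ℝ) : expFun b ξ = expFun ξ 1 ^ b := by
  simp only [expFun, ← Complex.exp_int_mul]
  congr 1
  push_cast
  ring

lemma expFun_one_eq_one_iff {ξ : ℝ} : expFun ξ 1 = 1 ↔ ∃ n : ℤ, ξ = n := by
  simp only [expFun, Complex.exp_eq_one_iff]
  constructor
  · rintro ⟨n, hn⟩
    have h : -(2 * Real.pi * ξ) = n * (2 * Real.pi) := by simpa using congrArg Complex.im hn
    exact ⟨-n, by push_cast; nlinarith [Real.pi_pos]⟩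
  · rintro ⟨n, rfl⟩
    exact ⟨-n, by push_cast; ring⟩

noncomputable def expBCF (ξ : ℝ) : BoundedContinuousFunction ℝ ℂ :=
  BoundedContinuousFunction.ofNormedAddCommGroup (expFun ξ) (continuous_expFun ξ) 1
    fun x => (norm_expFun ξ x).le

lemma ft_eq_integral_expBCF (μ : Measure ℝ) (ξ : ℝ) : ft μ ξ = ∫ x, expBCF ξ x ∂μ := rfl

lemma ft_dirac (a ξ : ℝ) : ft (Measure.dirac a) ξ = expFun ξ a :=
  integral_dirac' _ _ (continuous_expFun ξ).stronglyMeasurable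

lemma integrable_expFun (μ : Measure ℝ) [IsFiniteMeasure μ] (ξ : ℝ) :
    Integrable (expFun ξ) μ :=
  (expBCF ξ).integrable μ

instance (A : Finset ℝ) : IsFiniteMeasure (uniformD A) := by
  rcases A.eq_empty_or_nonempty with rfl | hA
  · simp only [uniformD, Finset.sum_empty, smul_zero]; infer_instance
  · refine ⟨?_⟩
    simp [uniformD, ENNReal.inv_mul_cancel, hA.card_ne_zero]

instance (B : Finset ℤ) (c : ℝ) : IsFiniteMeasure (scaledB B c) := by
  unfold scaledB; infer_instance

lemma ft_uniformD (A : Finset ℝ) (ξ : ℝ) :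
    ft (uniformD A) ξ = (A.card : ℂ)⁻¹ * ∑ a ∈ A, expFun ξ a := by
  unfold uniformD ft
  rw [integral_smul_measure, integral_finsetSum_measure fun a _ => integrable_expFun _ ξ]
  simp [Complex.real_smul]

lemma ft_scaledB (B : Finset ℤ) (c ξ : ℝ) : ft (scaledB B c) ξ = MB B (ξ / c) := by
  rcases eq_or_ne c 0 with rfl | hc
  -- `b / 0 = 0`: both sides are `1`, or `0` when `B = ∅`.
  · rcases B.eq_empty_or_nonempty with rfl | hB
    · simp [scaledB, ft, uniformD, MB]
    · simp [scaledB, Finset.image_const hB, ft_uniformD, MB, expFun_comm _ (0 : ℝ),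
        expFun_zero_left, hB.card_ne_zero]
  have hinj : Set.InjOn (fun b : ℤ => (b : ℝ) / c) B := fun a _ b _ h => by
    simpa [div_left_inj' hc] using h
  rw [scaledB, ft_uniformD, MB, Finset.card_image_of_injOn hinj, Finset.sum_image hinj]
  congr 1
  refine Finset.sum_congr rfl fun b _ => ?_
  simp only [expFun]
  congr 3
  field_simp

lemma ft_conv (μ ν : Measure ℝ) [SFinite μ] [SFinite ν] (ξ : ℝ) :
    ft (μ.conv ν) ξ = ft μ ξ * ft ν ξ := by
  rw [ft, Measure.conv, integral_map (by fun_prop) (continuous_expFun ξ).aestronglyMeasurable]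
  simp only [expFun_add_right]
  exact integral_prod_mul _ _

instance isFiniteMeasure_partialConv (N : ℕ → ℕ) (B : ℕ → Finset ℤ) (k : ℕ) :
    IsFiniteMeasure (partialConv N B k) := by
  induction k with
  | zero => rw [partialConv]; infer_instance
  | succ k ih => rw [partialConv]; infer_instance

lemma prod_Icc_one_succ {α : Type*} [CommMonoid α] (f : ℕ → α) (n : ℕ) :
    ∏ i ∈ Finset.Icc 1 (n + 1), f i = f 1 * ∏ i ∈ Finset.Icc 1 n, f (1 + i) := by
  induction n with
  | zero => simp
  | succ n ih =>
    rw [Finset.prod_Icc_succ_top (by omega), ih, Finset.prod_Icc_succ_top (by omega), mul_assoc,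
      add_comm 1 (n + 1)]

lemma ft_partialConv_succ (N : ℕ → ℕ) (B : ℕ → Finset ℤ) (ξ : ℝ) (k : ℕ) :
    ft (partialConv N B (k + 1)) ξ = MB (B 1) (ξ / N 1) *
      ft (partialConv (fun j => N (1 + j)) (fun j => B (1 + j)) k) (ξ / N 1) := by
  induction k with
  | zero =>
    simp only [partialConv, zero_add, Finset.Icc_self, Finset.prod_singleton,
      Measure.dirac_zero_conv, ft_scaledB, ft_dirac, expFun_comm _ (0 : ℝ), expFun_zero_left,
      mul_one]
  | succ k ih =>
    rw [partialConv, ft_conv, ih, partialConv, ft_conv, ft_scaledB, ft_scaledB, mul_assoc,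
      prod_Icc_one_succ, div_div, add_comm 1 (k + 1)]

lemma IsInfiniteConv.tendsto_integral {N : ℕ → ℕ} {B : ℕ → Finset ℤ} {μ : Measure ℝ}
    (h : IsInfiniteConv N B μ) (f : BoundedContinuousFunction ℝ ℂ) :
    Tendsto (fun k => ∫ x, f x ∂partialConv N B k) atTop (𝓝 (∫ x, f x ∂μ)) := by
  have := h.1
  rw [← integral_re_add_im (f.integrable μ)]
  simp_rw [← integral_re_add_im (f.integrable (partialConv N B _))]
  refine Tendsto.add ?_ ?_
  · exact (RCLike.continuous_ofReal.tendsto _).comp (h.2 (f.comp RCLike.re RCLike.lipschitzWith_re))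
  · exact ((RCLike.continuous_ofReal.tendsto _).comp
      (h.2 (f.comp RCLike.im RCLike.lipschitzWith_im))).mul_const _

lemma IsInfiniteConv.ft_eq_MB_mul_ft {N : ℕ → ℕ} {B : ℕ → Finset ℤ} {μ ν : Measure ℝ}
    (hμ : IsInfiniteConv N B μ) (hν : IsNuGt N B 1 ν) (ξ : ℝ) :
    ft μ ξ = MB (B 1) (ξ / N 1) * ft ν (ξ / N 1) := by
  have hlim := (hμ.tendsto_integral (expBCF ξ)).comp (tendsto_add_atTop_nat 1)
  have hlim' := (hν.tendsto_integral (expBCF (ξ / N 1))).const_mul (MB (B 1) (ξ / N 1))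
  simp only [Function.comp_def, ← ft_eq_integral_expBCF, ft_partialConv_succ] at hlim hlim'
  exact tendsto_nhds_unique hlim hlim'

lemma IsOrthoSet.ft_sub_eq_zero {μ : Measure ℝ} {Λ : Set ℝ} (h : IsOrthoSet μ Λ) {l₁ l₂ : ℝ}
    (h₁ : l₁ ∈ Λ) (h₂ : l₂ ∈ Λ) (hne : l₁ ≠ l₂) : ft μ (l₂ - l₁) = 0 := by
  simpa [conj_expFun_mul_expFun, hne, ft] using h l₁ h₁ l₂ h₂

lemma isOrthoSet_iff {μ : Measure ℝ} [IsProbabilityMeasure μ] {Λ : Set ℝ} :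
    IsOrthoSet μ Λ ↔ ∀ l₁ ∈ Λ, ∀ l₂ ∈ Λ, l₁ ≠ l₂ → ft μ (l₂ - l₁) = 0 := by
  refine ⟨fun h l₁ h₁ l₂ h₂ hne => h.ft_sub_eq_zero h₁ h₂ hne, fun h l₁ h₁ l₂ h₂ => ?_⟩
  simp only [conj_expFun_mul_expFun]
  split_ifs with hl
  · simp [hl, expFun_zero_left]
  · exact h l₁ h₁ l₂ h₂ hl

lemma IsCRS.sum_comp_intCast {B : Finset ℤ} {M : ℕ} [NeZero M] (h : IsCRS B M) {α : Type*}
    [AddCommMonoid α] (f : ZMod M → α) : ∑ b ∈ B, f b = ∑ r : ZMod M, f r := by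
  refine Finset.sum_nbij (fun b : ℤ => (b : ZMod M)) (fun _ _ => Finset.mem_univ _)
    (fun a ha b hb hab => ?_) (fun r _ => ?_) fun _ _ => rfl
  · obtain ⟨_, _, hu⟩ := h (a : ZMod M)
    exact (hu a ⟨ha, rfl⟩).trans (hu b ⟨hb, hab.symm⟩).symm
  · obtain ⟨b, ⟨hb, rfl⟩, _⟩ := h r
    exact ⟨b, hb, rfl⟩

lemma IsCRS.card_eq {B : Finset ℤ} {M : ℕ} [NeZero M] (h : IsCRS B M) : B.card = M := by
  simpa using h.sum_comp_intCast (α := ℕ) fun _ => 1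

lemma Finset.untopD_min_le {B : Finset ℤ} {b : ℤ} (hb : b ∈ B) : WithTop.untopD 0 B.min ≤ b := by
  rw [← Finset.coe_min' ⟨b, hb⟩, WithTop.untopD_coe]
  exact Finset.min'_le B b hb

lemma X_pow_sub_one_dvd_X_pow_sub_X_pow {R : Type*} [CommRing R] {M m n : ℕ}
    (h : m ≡ n [MOD M]) : (X ^ M - 1 : R[X]) ∣ X ^ m - X ^ n := by
  wlog hnm : n ≤ m generalizing m n
  · exact dvd_sub_comm.mp (this h.symm (by omega))
  obtain ⟨q, hq⟩ := (Nat.modEq_iff_dvd' hnm).mp h.symm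
  have hm : m = n + M * q := by omega
  rw [hm, pow_add, pow_mul, ← mul_sub_one]
  simpa using (sub_dvd_pow_sub_pow (X ^ M : R[X]) 1 q).mul_left (X ^ n)

lemma sum_range_X_pow_eq_sum_zmod (M : ℕ) [NeZero M] {R : Type*} [CommSemiring R] :
    ∑ i ∈ Finset.range M, (X : R[X]) ^ i = ∑ r : ZMod M, X ^ r.val := by
  obtain ⟨n, rfl⟩ : ∃ n, M = n + 1 := ⟨M - 1, (Nat.sub_add_cancel NeZero.one_le).symm⟩
  exact (Fin.sum_univ_eq_sum_range (fun i => (X : R[X]) ^ i) (n + 1)).symm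

lemma IsCRS.geomPoly_dvd_numerPoly {B : Finset ℤ} {M : ℕ} [NeZero M] (h : IsCRS B M) :
    geomPoly M ∣ numerPoly B := by
  set c := WithTop.untopD 0 B.min
  have hgeom : geomPoly M = ∑ b ∈ B, X ^ ((b : ZMod M) - c).val := by
    rw [h.sum_comp_intCast fun r => X ^ (r - c).val, geomPoly, sum_range_X_pow_eq_sum_zmod]
    exact (Equiv.sum_comp (Equiv.subRight (c : ZMod M)) fun r => X ^ r.val).symm
  have hmod : ∀ b ∈ B, (b - c).toNat ≡ ((b : ZMod M) - c).val [MOD M] := fun b hb => by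
    rw [← ZMod.natCast_eq_natCast_iff, ZMod.natCast_zmod_val, ← Int.cast_natCast,
      Int.toNat_of_nonneg (sub_nonneg.mpr (Finset.untopD_min_le hb)), Int.cast_sub]
  have hdiff : (X ^ M - 1 : ℤ[X]) ∣ numerPoly B - geomPoly M := by
    rw [numerPoly, hgeom, ← Finset.sum_sub_distrib]
    exact Finset.dvd_sum fun b hb => X_pow_sub_one_dvd_X_pow_sub_X_pow (hmod b hb)
  have hgeom_dvd : geomPoly M ∣ (X ^ M - 1 : ℤ[X]) := ⟨X - 1, (geom_sum_mul X M).symm⟩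
  simpa using (hgeom_dvd.trans hdiff).add (dvd_refl (geomPoly M))

lemma sum_zpow_eq_mul_aeval_numerPoly {K : Type*} [Field K] (B : Finset ℤ) {z : K} (hz : z ≠ 0) :
    ∑ b ∈ B, z ^ b = z ^ WithTop.untopD 0 B.min * aeval z (numerPoly B) := by
  rw [numerPoly, map_sum, Finset.mul_sum]
  refine Finset.sum_congr rfl fun b hb => ?_
  rw [aeval_X_pow, ← zpow_natCast, Int.toNat_of_nonneg (sub_nonneg.mpr (Finset.untopD_min_le hb)),
    ← zpow_add₀ hz, add_sub_cancel]

lemma IsCRS.aeval_numerPoly {B : Finset ℤ} {M : ℕ} [NeZero M] (h : IsCRS B M) {R : Type*}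
    [CommRing R] (z : R) : aeval z (numerPoly B) = aeval z (geomPoly M) * aeval z (charPoly B) := by
  have hmonic : (geomPoly M).Monic := monic_geom_sum_X (NeZero.ne M)
  have hmod : numerPoly B %ₘ geomPoly M = 0 :=
    (modByMonic_eq_zero_iff_dvd hmonic).mpr h.geomPoly_dvd_numerPoly
  have hfactor := modByMonic_add_div (numerPoly B) (geomPoly M)
  rw [hmod, zero_add] at hfactor
  rw [charPoly, h.card_eq, ← map_mul, hfactor]

lemma expFun_one_pow (ξ : ℝ) (n : ℕ) : expFun ξ 1 ^ n = expFun (n * ξ) 1 := by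
  simp only [expFun, ← Complex.exp_nat_mul]
  congr 1
  push_cast
  ring

lemma exists_eq_div_of_aeval_geomPoly_eq_zero {M : ℕ} [NeZero M] {ξ : ℝ}
    (h : aeval (expFun ξ 1) (geomPoly M) = 0) : ∃ j : ℤ, ¬ (M : ℤ) ∣ j ∧ ξ = j / M := by
  have hM : (M : ℝ) ≠ 0 := Nat.cast_ne_zero.mpr (NeZero.ne M)
  set z := expFun ξ 1 with hz
  have hsum : ∑ i ∈ Finset.range M, z ^ i = 0 := by simpa [geomPoly] using h
  have hz1 : z ≠ 1 := fun h1 => by simp [h1, NeZero.ne M] at hsum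
  have hzM : z ^ M = 1 := by
    have := geom_sum_mul z M
    rw [hsum, zero_mul] at this
    exact sub_eq_zero.mp this.symm
  rw [hz, expFun_one_pow, expFun_one_eq_one_iff] at hzM
  obtain ⟨j, hj⟩ := hzM
  have hξ : ξ = j / M := by field_simp; linarith
  refine ⟨j, fun ⟨c, hc⟩ => hz1 (expFun_one_eq_one_iff.mpr ⟨c, ?_⟩), hξ⟩
  rw [hξ, hc]
  field_simp
  push_cast
  ring

lemma IsCRS.exists_eq_div_of_MB_eq_zero {B : Finset ℤ} {M : ℕ} [NeZero M] (h : IsCRS B M)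
    (hU : SatisfiesUDZ B M) {ξ : ℝ} (hξ : MB B ξ = 0) : ∃ j : ℤ, ¬ (M : ℤ) ∣ j ∧ ξ = j / M := by
  set z := expFun ξ 1
  have hz : z ≠ 0 := Complex.exp_ne_zero _
  have hsum : ∑ b ∈ B, z ^ b = 0 := by
    simpa [MB, expFun_intCast, h.card_eq, NeZero.ne M] using hξ
  rw [sum_zpow_eq_mul_aeval_numerPoly B hz, h.aeval_numerPoly] at hsum
  rcases mul_eq_zero.mp hsum with hmin | hprod
  · exact absurd hmin (zpow_ne_zero _ hz)
  rcases mul_eq_zero.mp hprod with hgeom | hchar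
  · exact exists_eq_div_of_aeval_geomPoly_eq_zero hgeom
  · exact hU hchar

lemma eq_and_ne_of_sub_eq_div {N : ℝ} {M : ℕ} [NeZero M] (hN : 0 < N) {a₁ a₂ : ℝ}
    (ha₁ : a₁ ∈ Set.Ico 0 (N / M)) (ha₂ : a₂ ∈ Set.Ico 0 (N / M)) {t₁ t₂ : ℕ} {ω₁ ω₂ j : ℤ}
    (hj : ¬ (M : ℤ) ∣ j)
    (h : (a₂ + t₂ * (N / M)) / N + ω₂ - ((a₁ + t₁ * (N / M)) / N + ω₁) = j / M) :
    a₁ = a₂ ∧ t₁ ≠ t₂ := by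
  have hM : (0 : ℝ) < M := Nat.cast_pos.mpr (Nat.pos_of_neZero M)
  have hfloor : ∀ a ∈ Set.Ico 0 (N / M), ⌊a * M / N⌋ = 0 := fun a ⟨h0, h1⟩ => by
    rw [Int.floor_eq_zero_iff]
    constructor
    · positivity
    · rw [div_lt_one hN]; rwa [lt_div_iff₀ hM] at h1
  set m : ℤ := j - t₂ + t₁ - M * (ω₂ - ω₁)
  have hm : a₂ * M / N = a₁ * M / N + m := by
    field_simp at h ⊢
    push_cast [m]
    linear_combination h
  have hm0 : m = 0 := by
    simpa [hfloor a₁ ha₁, hfloor a₂ ha₂, eq_comm] using congrArg Int.floor hm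
  refine ⟨?_, fun ht => hj ⟨ω₂ - ω₁, by omega⟩⟩
  rw [hm0, Int.cast_zero, add_zero] at hm
  field_simp at hm
  linarith

lemma mul_mem_of_mem_PsetT {Λ : Set ℝ} {N γ l : ℝ} (hN : N ≠ 0) (hl : l ∈ PsetT Λ N γ) :
    N * l ∈ Λ := by
  obtain ⟨ω, rfl, hω⟩ := hl
  rwa [mul_add, mul_div_cancel₀ _ hN]

theorem stmt14_general
    (N M : ℕ → ℕ) (B : ℕ → Finset ℤ) (μ : Measure ℝ) (ν : ℕ → Measure ℝ)
    (hM : ∀ k ≥ 1, 2 ≤ M k)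
    (hCRS : ∀ k ≥ 1, IsCRS (B k) (M k))
    (hUDZ : ∀ k ≥ 1, SatisfiesUDZ (B k) (M k))
    (hμ : IsInfiniteConv N B μ)
    (hν : ∀ k ≥ 1, IsNuGt N B k (ν k))
    (Λ : Set ℝ) (hΛ : IsSpectralPair μ Λ)
    (g : ℕ → ℝ) (hginj : Function.Injective g)
    (hgrange : Set.range g =
      {x : ℝ | (∃ q : ℚ, x = (q : ℝ)) ∧ 0 ≤ x ∧ x < (N 1 : ℝ) / (M 1 : ℝ)}) :
    ∀ k j : ℕ, k ≠ j →
      ∀ ik, (∃ y ∈ Gamma0 (N 1) (M 1), ik = g k + y) →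
      ∀ ij, (∃ y ∈ Gamma0 (N 1) (M 1), ij = g j + y) →
        PsetT Λ (N 1) ik ∪ PsetT Λ (N 1) ij = ∅ ∨
          IsOrthoSet (ν 1) (PsetT Λ (N 1) ik ∪ PsetT Λ (N 1) ij) := by
  rintro k j hkj _ ⟨_, ⟨t, -, rfl⟩, rfl⟩ _ ⟨_, ⟨s, -, rfl⟩, rfl⟩
  right
  have : NeZero (M 1) := ⟨by linarith [hM 1 le_rfl]⟩
  have := (hν 1 le_rfl).1
  have hg (i : ℕ) : g i ∈ Set.Ico 0 ((N 1 : ℝ) / M 1) := by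
    obtain ⟨-, h0, h1⟩ := hgrange ▸ Set.mem_range_self i
    exact ⟨h0, h1⟩
  have hN : (0 : ℝ) < N 1 :=
    (div_pos_iff_of_pos_right (Nat.cast_pos.mpr (Nat.pos_of_neZero (M 1)))).mp
      ((hg 0).1.trans_lt (hg 0).2)
  rw [isOrthoSet_iff]
  intro l₁ hl₁ l₂ hl₂ hne
  have hΛl (l : ℝ) (hl : l ∈ PsetT Λ (N 1) (g k + t * (N 1 / M 1)) ∪
      PsetT Λ (N 1) (g j + s * (N 1 / M 1))) : N 1 * l ∈ Λ :=
    hl.elim (mul_mem_of_mem_PsetT hN.ne') (mul_mem_of_mem_PsetT hN.ne')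
  have hfactor := hμ.ft_eq_MB_mul_ft (hν 1 le_rfl) (N 1 * l₂ - N 1 * l₁)
  rw [hΛ.1.ft_sub_eq_zero (hΛl l₁ hl₁) (hΛl l₂ hl₂) (by simpa [hN.ne'] using hne), ← mul_sub,
    mul_div_cancel_left₀ _ hN.ne'] at hfactor
  refine (mul_eq_zero.mp hfactor.symm).resolve_left fun hMB => ?_
  obtain ⟨_, hdvd, hdiff⟩ := (hCRS 1 le_rfl).exists_eq_div_of_MB_eq_zero (hUDZ 1 le_rfl) hMB
  rcases hl₁ with ⟨ω₁, rfl, -⟩ | ⟨ω₁, rfl, -⟩ <;> rcases hl₂ with ⟨ω₂, rfl, -⟩ | ⟨ω₂, rfl, -⟩ <;>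
    obtain ⟨hga, htne⟩ := eq_and_ne_of_sub_eq_div hN (hg _) (hg _) hdvd hdiff
  exacts [htne rfl, hkj (hginj hga), hkj (hginj hga).symm, htne rfl]

theorem stmt14
    (N M : ℕ → ℕ) (B : ℕ → Finset ℤ) (μ : Measure ℝ) (ν : ℕ → Measure ℝ)
    (hM : ∀ k ≥ 1, 2 ≤ M k) (hMN : ∀ k ≥ 1, M k ≤ N k)
    (hCRS : ∀ k ≥ 1, IsCRS (B k) (M k))
    (hUDZ : ∀ k ≥ 1, SatisfiesUDZ (B k) (M k))
    (hμ : IsInfiniteConv N B μ)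
    (hν : ∀ k ≥ 1, IsNuGt N B k (ν k))
    (htight : IsTightFamily fun k => ν (k + 1))
    (Λ : Set ℝ) (hΛ : IsSpectralPair μ Λ) (h0 : (0 : ℝ) ∈ Λ)
    (g : ℕ → ℝ) (hg0 : g 0 = 0) (hginj : Function.Injective g)
    (hgrange : Set.range g =
      {x : ℝ | (∃ q : ℚ, x = (q : ℝ)) ∧ 0 ≤ x ∧ x < (N 1 : ℝ) / (M 1 : ℝ)}) :
    ∀ k j : ℕ, k ≠ j →
      ∀ ik, (∃ y ∈ Gamma0 (N 1) (M 1), ik = g k + y) →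
      ∀ ij, (∃ y ∈ Gamma0 (N 1) (M 1), ij = g j + y) →
        PsetT Λ (N 1) ik ∪ PsetT Λ (N 1) ij = ∅ ∨
          IsOrthoSet (ν 1) (PsetT Λ (N 1) ik ∪ PsetT Λ (N 1) ij) :=
  stmt14_general N M B μ ν hM hCRS hUDZ hμ hν Λ hΛ g hginj hgrange
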